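/- For n = 2 and Q a bounded one-dimensional face of P_a with endpoints v = (a,b) and v' = (a',b') in Γ_a ∩ Q, a < a', b > b', such that G_Q is generated by v − v': every u ∈ (M_Q \ M_Q') ∩ V_Q is congruent modulo G_Q, up to adding an element of Γ_a ∩ Q and removing generators, to an element of the finite box {(i,j) ∈ Z_{>0}^2 : i ≤ a', j ≤ b}; consequently R_Q = ∪_{k≥0} {−L_Q(u) + k : u ∈ E_Q ∩ (M_Q^{(k)} \ M_Q^{(k+1)})} where E_Q = {(i,j) ∈ Z_{>0}^2 : i ≤ a', j ≤ b}. -/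

import Mathlib

/-!
Write `v = (a, b)`, `v' = (a', b')`, `p = a' - a`, `q = b - b'`. As `Γ` is an upper set
containing `v, v' ∈ Q`, the semigroup defining `M_Q` contains `ℕ²` and `ℤ (v - v') = ℤ (-p, q)`.
Hence `u ∉ M_Q'` says that the orbit of `u - v` under translation by `(-p, q)` avoids the
quadrant `[1, ∞)²`, while the orbit of `u + s v` meets it for `s` large. For the least such `s`
that orbit passes through the box `E_Q = [1, a'] × [1, b]`. Translating by `ℤ (v - v')` fixes
`L_Q` and the position relative to the `M_Q^{(k)}`, translating by `s v` shifts both by `s`, and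
`V_Q = ℝ²` because `v, v'` are independent; this gives both claims.
-/

open Set

namespace BS

def toR {n : ℕ} (u : Fin n → ℤ) : Fin n → ℝ := fun i => (u i : ℝ)

def natR {n : ℕ} (u : Fin n → ℕ) : Fin n → ℝ := fun i => (u i : ℝ)

def natZ {n : ℕ} (u : Fin n → ℕ) : Fin n → ℤ := fun i => (u i : ℤ)

/-- `Γ` is the exponent set of a nonzero monomial ideal. -/
def IsMonIdeal {n : ℕ} (Γ : Set (Fin n → ℕ)) : Prop :=
  Γ.Nonempty ∧ ∀ u ∈ Γ, ∀ w : Fin n → ℕ, u + w ∈ Γ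

/-- The Newton polyhedron: convex hull of the exponent set. -/
def newton {n : ℕ} (Γ : Set (Fin n → ℕ)) : Set (Fin n → ℝ) :=
  convexHull ℝ (natR '' Γ)

/-- The subsemigroup (containing 0) of ℤⁿ generated by differences u - v,
u ∈ Γ, v ∈ Γ ∩ Q. -/
def diffMonoid {n : ℕ} (Γ : Set (Fin n → ℕ)) (Q : Set (Fin n → ℝ)) :
    AddSubmonoid (Fin n → ℤ) :=
  AddSubmonoid.closure {d | ∃ u ∈ Γ, ∃ v ∈ Γ, natR v ∈ Q ∧ d = natZ u - natZ v}

/-- M_Q : the translate by e = (1,...,1) of the difference semigroup. -/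
def MQ {n : ℕ} (Γ : Set (Fin n → ℕ)) (Q : Set (Fin n → ℝ)) : Set (Fin n → ℤ) :=
  {m | m - 1 ∈ diffMonoid Γ Q}

/-- M_Q^{(k)} = k·v₀ + M_Q. -/
def MQk {n : ℕ} (Γ : Set (Fin n → ℕ)) (Q : Set (Fin n → ℝ)) (v0 : Fin n → ℕ) (k : ℕ) :
    Set (Fin n → ℤ) :=
  {m | m - (k : ℤ) • natZ v0 ∈ MQ Γ Q}

/-- V_Q : linear span of the face Q. -/
def VQ {n : ℕ} (Q : Set (Fin n → ℝ)) : Submodule ℝ (Fin n → ℝ) := Submodule.span ℝ Q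

/-- R_Q = { -L_Q(u) : u ∈ (M_Q \ M_Q') ∩ V_Q }. -/
def RQ {n : ℕ} (Γ : Set (Fin n → ℕ)) (Q : Set (Fin n → ℝ)) (v0 : Fin n → ℕ)
    (L : (Fin n → ℝ) →ₗ[ℝ] ℝ) : Set ℝ :=
  {x | ∃ u ∈ MQ Γ Q \ MQk Γ Q v0 1, toR u ∈ VQ Q ∧ x = - L (toR u)}

/-- Q is contained in some coordinate hyperplane. -/
def InCoordHyp {n : ℕ} (Q : Set (Fin n → ℝ)) : Prop := ∃ i, ∀ q ∈ Q, q i = 0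

/-- The subgroup G_Q of ℤⁿ generated by differences of elements of Γ ∩ Q. -/
def diffGroup {n : ℕ} (Γ : Set (Fin n → ℕ)) (Q : Set (Fin n → ℝ)) :
    AddSubgroup (Fin n → ℤ) :=
  AddSubgroup.closure
    {d | ∃ u ∈ Γ, natR u ∈ Q ∧ ∃ v ∈ Γ, natR v ∈ Q ∧ d = natZ u - natZ v}

end BS

namespace BS

def OrbitMeetsPosQuadrant (p q x y : ℤ) : Prop := ∃ M : ℤ, 1 ≤ x - M * p ∧ 1 ≤ y + M * q

/- Take the leftmost orbit point with `x ≥ 1` and `y ≤ b`: either `x ≤ p`, or `y > b - q` and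
then `x > a + p` would put its neighbour `(x - p, y + q)` into `(a, b) + [1, ∞)²`. -/
lemma OrbitMeetsPosQuadrant.exists_mem_box {p q a b x y : ℤ} (hp : 0 < p) (hq : 0 < q)
    (ha : 0 ≤ a) (hqb : q ≤ b) (h : OrbitMeetsPosQuadrant p q x y)
    (h' : ¬ OrbitMeetsPosQuadrant p q (x - a) (y - b)) :
    ∃ M : ℤ, 1 ≤ x - M * p ∧ x - M * p ≤ a + p ∧ 1 ≤ y + M * q ∧ y + M * q ≤ b := by
  obtain ⟨M₀, hx₀, hy₀⟩ := h
  set M₁ := (x - 1) / p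
  have hM₁ : M₁ * p ≤ x - 1 := Int.ediv_mul_le _ hp.ne'
  have hM₀₁ : M₀ ≤ M₁ := Int.le_ediv_of_mul_le hp (by linarith)
  set N := (b - y) / q
  have hN : N * q ≤ b - y := Int.ediv_mul_le _ hq.ne'
  have hN' : b - y < (N + 1) * q := Int.lt_ediv_add_one_mul_self _ hq
  rcases le_or_gt M₁ N with hM₁N | hNM₁
  · have hM₁' : x - 1 < (M₁ + 1) * p := Int.lt_ediv_add_one_mul_self _ hp
    have hq₀₁ : M₀ * q ≤ M₁ * q := mul_le_mul_of_nonneg_right hM₀₁ hq.le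
    have hq₁N : M₁ * q ≤ N * q := mul_le_mul_of_nonneg_right hM₁N hq.le
    exact ⟨M₁, by linarith, by linarith, by linarith, by linarith⟩
  · have hpN₁ : N * p ≤ M₁ * p := mul_le_mul_of_nonneg_right hNM₁.le hp.le
    refine ⟨N, by linarith, ?_, by linarith, by linarith⟩
    by_contra! hx
    exact h' ⟨N + 1, by linarith, by linarith⟩

lemma exists_orbitMeetsPosQuadrant_add_nsmul {p q a b : ℤ} (x y : ℤ) (hp : 0 < p)
    (ha : 0 ≤ a) (hb : 0 < b) : ∃ s : ℕ, OrbitMeetsPosQuadrant p q (x + s * a) (y + s * b) := by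
  set K : ℤ := ((1 - x).toNat : ℤ)
  set s : ℕ := (1 - y + K * q).toNat
  have hK : 1 - x ≤ K := Int.self_le_toNat _
  have hs : 1 - y + K * q ≤ s := Int.self_le_toNat _
  have hKp : K ≤ K * p := le_mul_of_one_le_right (by positivity) hp
  have hsb : (s : ℤ) ≤ s * b := le_mul_of_one_le_right (by positivity) hb
  have hsa : 0 ≤ (s : ℤ) * a := by positivity
  exact ⟨s, -K, by linarith, by linarith⟩

lemma exists_nsmul_orbit_mem_box {p q a b x y : ℤ} (hp : 0 < p) (hq : 0 < q)
    (ha : 0 ≤ a) (hqb : q ≤ b) (h' : ¬ OrbitMeetsPosQuadrant p q (x - a) (y - b)) :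
    ∃ s : ℕ, ∃ M : ℤ, 1 ≤ x + s * a - M * p ∧ x + s * a - M * p ≤ a + p ∧
      1 ≤ y + s * b + M * q ∧ y + s * b + M * q ≤ b := by
  classical
  have hex := exists_orbitMeetsPosQuadrant_add_nsmul (q := q) x y hp ha (hq.trans_le hqb)
  refine ⟨Nat.find hex, (Nat.find_spec hex).exists_mem_box hp hq ha hqb ?_⟩
  cases hs : Nat.find hex with
  | zero => simpa using h'
  | succ t =>
    have ht := Nat.find_min hex (show t < Nat.find hex by omega)
    push_cast
    convert ht using 2 <;> ring

section Lattice

variable {n : ℕ} {Γ : Set (Fin n → ℕ)} {Q : Set (Fin n → ℝ)}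

@[simp] lemma toR_add (u w : Fin n → ℤ) : toR (u + w) = toR u + toR w := by
  funext i; simp [toR]

@[simp] lemma toR_sub (u w : Fin n → ℤ) : toR (u - w) = toR u - toR w := by
  funext i; simp [toR]

@[simp] lemma toR_zsmul (M : ℤ) (u : Fin n → ℤ) : toR (M • u) = (M : ℝ) • toR u := by
  funext i; simp [toR]

@[simp] lemma toR_natZ (u : Fin n → ℕ) : toR (natZ u) = natR u := by
  funext i; simp [toR, natZ, natR]

lemma natZ_sub_mem_diffMonoid {u v : Fin n → ℕ} (hu : u ∈ Γ) (hv : v ∈ Γ) (hvQ : natR v ∈ Q) :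
    natZ u - natZ v ∈ diffMonoid Γ Q :=
  AddSubmonoid.subset_closure ⟨u, hu, v, hv, hvQ, rfl⟩

lemma mem_diffMonoid_of_nonneg (hΓ : ∀ u ∈ Γ, ∀ w, u + w ∈ Γ) {v : Fin n → ℕ} (hv : v ∈ Γ)
    (hvQ : natR v ∈ Q) {w : Fin n → ℤ} (hw : 0 ≤ w) : w ∈ diffMonoid Γ Q := by
  have hw' : w = natZ (v + fun i => (w i).toNat) - natZ v := by
    funext i; simp [natZ, Int.toNat_of_nonneg (hw i)]
  rw [hw']
  exact natZ_sub_mem_diffMonoid (hΓ v hv _) hv hvQ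

lemma mem_MQ_of_one_le (hΓ : ∀ u ∈ Γ, ∀ w, u + w ∈ Γ) {v : Fin n → ℕ} (hv : v ∈ Γ)
    (hvQ : natR v ∈ Q) {w : Fin n → ℤ} (hw : 1 ≤ w) : w ∈ MQ Γ Q :=
  mem_diffMonoid_of_nonneg hΓ hv hvQ (sub_nonneg.2 hw)

lemma zsmul_natZ_sub_mem_diffMonoid {v v' : Fin n → ℕ} (hv : v ∈ Γ) (hvQ : natR v ∈ Q)
    (hv' : v' ∈ Γ) (hv'Q : natR v' ∈ Q) (M : ℤ) : M • (natZ v - natZ v') ∈ diffMonoid Γ Q := by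
  obtain ⟨m, rfl | rfl⟩ := Int.eq_nat_or_neg M
  · rw [natCast_zsmul]
    exact nsmul_mem (natZ_sub_mem_diffMonoid hv hv' hv'Q) m
  · rw [neg_smul, ← smul_neg, neg_sub, natCast_zsmul]
    exact nsmul_mem (natZ_sub_mem_diffMonoid hv' hv hvQ) m

lemma add_mem_MQ_iff {d : Fin n → ℤ} (hd : d ∈ diffMonoid Γ Q) (hd' : -d ∈ diffMonoid Γ Q)
    {w : Fin n → ℤ} : w + d ∈ MQ Γ Q ↔ w ∈ MQ Γ Q := by
  simp only [MQ, mem_ofPred_eq]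
  rw [show w + d - 1 = w - 1 + d by abel]
  exact ⟨fun h => by simpa using add_mem h hd', fun h => add_mem h hd⟩

lemma add_mem_MQk_iff {d : Fin n → ℤ} (hd : d ∈ diffMonoid Γ Q) (hd' : -d ∈ diffMonoid Γ Q)
    {v₀ : Fin n → ℕ} {k : ℕ} {w : Fin n → ℤ} : w + d ∈ MQk Γ Q v₀ k ↔ w ∈ MQk Γ Q v₀ k := by
  simp only [MQk, mem_ofPred_eq]
  rw [add_sub_right_comm]
  exact add_mem_MQ_iff hd hd'

lemma add_nsmul_mem_MQk_iff {v₀ : Fin n → ℕ} (s k : ℕ) {w : Fin n → ℤ} :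
    w + (s : ℤ) • natZ v₀ ∈ MQk Γ Q v₀ (s + k) ↔ w ∈ MQk Γ Q v₀ k := by
  simp only [MQk, mem_ofPred_eq]
  rw [show w + (s : ℤ) • natZ v₀ - ((s + k : ℕ) : ℤ) • natZ v₀ = w - (k : ℤ) • natZ v₀ by
    push_cast; rw [add_smul]; abel]

lemma MQk_zero (v₀ : Fin n → ℕ) : MQk Γ Q v₀ 0 = MQ Γ Q := by
  ext; simp [MQk]

lemma add_nsmul_mem_MQk_diff_iff {v₀ : Fin n → ℕ} (k : ℕ) {w : Fin n → ℤ} :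
    w + (k : ℤ) • natZ v₀ ∈ MQk Γ Q v₀ k \ MQk Γ Q v₀ (k + 1) ↔ w ∈ MQ Γ Q \ MQk Γ Q v₀ 1 := by
  have hk := add_nsmul_mem_MQk_iff (Γ := Γ) (Q := Q) (v₀ := v₀) k 0 (w := w)
  rw [add_zero, MQk_zero] at hk
  rw [mem_sdiff, mem_sdiff, hk, add_nsmul_mem_MQk_iff]

lemma map_toR_add_zsmul_natZ_sub (L : (Fin n → ℝ) →ₗ[ℝ] ℝ) {v v' : Fin n → ℕ}
    (hLv : L (natR v) = 1) (hLv' : L (natR v') = 1) (w : Fin n → ℤ) (M : ℤ) :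
    L (toR (w + M • (natZ v - natZ v'))) = L (toR w) := by
  simp only [toR_add, toR_sub, toR_zsmul, toR_natZ, map_add, map_sub, map_smul, hLv, hLv',
    sub_self, smul_zero, add_zero]

lemma map_toR_add_nsmul_natZ (L : (Fin n → ℝ) →ₗ[ℝ] ℝ) {v : Fin n → ℕ}
    (hLv : L (natR v) = 1) (w : Fin n → ℤ) (s : ℕ) :
    L (toR (w + (s : ℤ) • natZ v)) = L (toR w) + s := by
  simp only [toR_add, toR_zsmul, toR_natZ, map_add, map_smul, hLv, smul_eq_mul, mul_one,
    Int.cast_natCast]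

end Lattice

lemma span_pair_eq_top {x y : Fin 2 → ℝ} (h : x 0 * y 1 - x 1 * y 0 ≠ 0) :
    Submodule.span ℝ {x, y} = ⊤ := by
  set d := x 0 * y 1 - x 1 * y 0
  refine Submodule.eq_top_iff'.2 fun w => Submodule.mem_span_pair.2
    ⟨(w 0 * y 1 - w 1 * y 0) / d, (x 0 * w 1 - x 1 * w 0) / d, ?_⟩
  refine funext (Fin.forall_fin_two.2 ⟨?_, ?_⟩) <;>
    simp only [Pi.add_apply, Pi.smul_apply, smul_eq_mul] <;> field_simp <;> ring

def EQ (a' b : ℕ) : Set (Fin 2 → ℤ) := {w | 0 < w 0 ∧ w 0 ≤ (a' : ℤ) ∧ 0 < w 1 ∧ w 1 ≤ (b : ℤ)}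

section Plane

variable {a b a' b' : ℕ} {Γ : Set (Fin 2 → ℕ)} {Q : Set (Fin 2 → ℝ)}

lemma VQ_eq_top (haa' : a < a') (hbb' : b' < b) (hvQ : natR ![a, b] ∈ Q)
    (hv'Q : natR ![a', b'] ∈ Q) : VQ Q = ⊤ := by
  refine top_unique (le_of_eq_of_le (span_pair_eq_top ?_).symm
    (Submodule.span_mono (Set.pair_subset hvQ hv'Q)))
  have hlt : a * b' < a' * b := by nlinarith
  have hlt' : (a : ℝ) * b' < a' * b := by exact_mod_cast hlt
  simp only [natR, Matrix.cons_val_zero, Matrix.cons_val_one]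
  linarith

lemma not_orbitMeetsPosQuadrant_of_not_mem_MQk_one (hΓ : ∀ u ∈ Γ, ∀ w, u + w ∈ Γ)
    (hv : ![a, b] ∈ Γ) (hvQ : natR ![a, b] ∈ Q) (hv' : ![a', b'] ∈ Γ) (hv'Q : natR ![a', b'] ∈ Q)
    {u : Fin 2 → ℤ} (hu : u ∉ MQk Γ Q ![a, b] 1) :
    ¬ OrbitMeetsPosQuadrant ((a' : ℤ) - a) ((b : ℤ) - b') (u 0 - a) (u 1 - b) := by
  rintro ⟨M, hx, hy⟩
  have hM : 1 ≤ u - natZ ![a, b] + M • (natZ ![a, b] - natZ ![a', b']) :=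
    Fin.forall_fin_two.2 ⟨by simp [natZ]; linarith, by simp [natZ]; linarith⟩
  have hd' : -(M • (natZ ![a, b] - natZ ![a', b'])) ∈ diffMonoid Γ Q := by
    simpa using zsmul_natZ_sub_mem_diffMonoid hv hvQ hv' hv'Q (-M)
  have huv : u - natZ ![a, b] ∈ MQ Γ Q :=
    (add_mem_MQ_iff (zsmul_natZ_sub_mem_diffMonoid hv hvQ hv' hv'Q M) hd').1
      (mem_MQ_of_one_le hΓ hv hvQ hM)
  exact hu (by simpa [MQk] using huv)

lemma exists_add_mem_EQ (hΓ : ∀ u ∈ Γ, ∀ w, u + w ∈ Γ) (haa' : a < a') (hbb' : b' < b)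
    (hv : ![a, b] ∈ Γ) (hvQ : natR ![a, b] ∈ Q) (hv' : ![a', b'] ∈ Γ) (hv'Q : natR ![a', b'] ∈ Q)
    {u : Fin 2 → ℤ} (hu : u ∉ MQk Γ Q ![a, b] 1) :
    ∃ s : ℕ, ∃ M : ℤ,
      u + M • (natZ ![a, b] - natZ ![a', b']) + (s : ℤ) • natZ ![a, b] ∈ EQ a' b := by
  obtain ⟨s, M, hx₁, hx₂, hy₁, hy₂⟩ := exists_nsmul_orbit_mem_box (by omega) (by omega)
    (by omega) (by omega) (not_orbitMeetsPosQuadrant_of_not_mem_MQk_one hΓ hv hvQ hv' hv'Q hu)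
  refine ⟨s, M, ?_⟩
  have hc₀ : (u + M • (natZ ![a, b] - natZ ![a', b']) + (s : ℤ) • natZ ![a, b]) 0 =
      u 0 + s * a - M * ((a' : ℤ) - a) := by
    simp [natZ]; ring
  have hc₁ : (u + M • (natZ ![a, b] - natZ ![a', b']) + (s : ℤ) • natZ ![a, b]) 1 =
      u 1 + s * b + M * ((b : ℤ) - b') := by
    simp [natZ]; ring
  simp only [EQ, mem_ofPred_eq, hc₀, hc₁]
  exact ⟨by linarith, by linarith, by linarith, by linarith⟩

lemma exists_mem_EQ_of_mem_MQ_diff (hΓ : ∀ u ∈ Γ, ∀ w, u + w ∈ Γ) (haa' : a < a')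
    (hbb' : b' < b) (hv : ![a, b] ∈ Γ) (hvQ : natR ![a, b] ∈ Q) (hv' : ![a', b'] ∈ Γ)
    (hv'Q : natR ![a', b'] ∈ Q) {L : (Fin 2 → ℝ) →ₗ[ℝ] ℝ} (hL : ∀ q ∈ Q, L q = 1)
    {u : Fin 2 → ℤ} (hu : u ∈ MQ Γ Q \ MQk Γ Q ![a, b] 1) :
    ∃ u' ∈ EQ a' b, ∃ k : ℕ, u' ∈ MQk Γ Q ![a, b] k \ MQk Γ Q ![a, b] (k + 1) ∧
      -L (toR u) = -L (toR u') + k := by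
  obtain ⟨s, M, hbox⟩ := exists_add_mem_EQ hΓ haa' hbb' hv hvQ hv' hv'Q hu.2
  have hd := zsmul_natZ_sub_mem_diffMonoid hv hvQ hv' hv'Q M
  have hd' : -(M • (natZ ![a, b] - natZ ![a', b'])) ∈ diffMonoid Γ Q := by
    simpa using zsmul_natZ_sub_mem_diffMonoid hv hvQ hv' hv'Q (-M)
  refine ⟨_, hbox, s, (add_nsmul_mem_MQk_diff_iff s).2
    ⟨(add_mem_MQ_iff hd hd').2 hu.1, fun h => hu.2 ((add_mem_MQk_iff hd hd').1 h)⟩, ?_⟩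
  rw [map_toR_add_nsmul_natZ L (hL _ hvQ),
    map_toR_add_zsmul_natZ_sub L (hL _ hvQ) (hL _ hv'Q)]
  ring

end Plane

end BS

theorem box_EQ_description_general (a b a' b' : ℕ) (haa' : a < a') (hbb' : b' < b)
    (Γ : Set (Fin 2 → ℕ)) (hΓ : BS.IsMonIdeal Γ)
    (Q : Set (Fin 2 → ℝ))
    (hv : (![a, b] : Fin 2 → ℕ) ∈ Γ) (hvQ : BS.natR ![a, b] ∈ Q)
    (hv' : (![a', b'] : Fin 2 → ℕ) ∈ Γ) (hv'Q : BS.natR ![a', b'] ∈ Q)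
    (L : (Fin 2 → ℝ) →ₗ[ℝ] ℝ) (hL1 : ∀ q ∈ Q, L q = 1) :
    (∀ u ∈ BS.MQ Γ Q \ BS.MQk Γ Q ![a, b] 1, BS.toR u ∈ BS.VQ Q →
      ∃ u' ∈ {w : Fin 2 → ℤ | 0 < w 0 ∧ w 0 ≤ (a' : ℤ) ∧ 0 < w 1 ∧ w 1 ≤ (b : ℤ)},
        ∃ k : ℕ, u' ∈ BS.MQk Γ Q ![a, b] k \ BS.MQk Γ Q ![a, b] (k+1) ∧
          - L (BS.toR u) = - L (BS.toR u') + (k : ℝ)) ∧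
    BS.RQ Γ Q ![a, b] L =
      {x : ℝ | ∃ k : ℕ,
        ∃ u ∈ {w : Fin 2 → ℤ | 0 < w 0 ∧ w 0 ≤ (a' : ℤ) ∧ 0 < w 1 ∧ w 1 ≤ (b : ℤ)} ∩
          (BS.MQk Γ Q ![a, b] k \ BS.MQk Γ Q ![a, b] (k+1)),
        x = - L (BS.toR u) + (k : ℝ)} := by
  have hrep := fun u (hu : u ∈ BS.MQ Γ Q \ BS.MQk Γ Q ![a, b] 1) =>
    BS.exists_mem_EQ_of_mem_MQ_diff hΓ.2 haa' hbb' hv hvQ hv' hv'Q hL1 hu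
  refine ⟨fun u hu _ => hrep u hu, Set.ext fun x => ⟨?_, ?_⟩⟩
  · rintro ⟨u, hu, -, rfl⟩
    obtain ⟨u', hbox, k, hmem, heq⟩ := hrep u hu
    exact ⟨k, u', ⟨hbox, hmem⟩, heq⟩
  · rintro ⟨k, u, ⟨-, hk⟩, rfl⟩
    obtain ⟨w, rfl⟩ : ∃ w, u = w + (k : ℤ) • BS.natZ ![a, b] := ⟨_, (sub_add_cancel _ _).symm⟩
    refine ⟨w, (BS.add_nsmul_mem_MQk_diff_iff k).1 hk,
      BS.VQ_eq_top haa' hbb' hvQ hv'Q ▸ Submodule.mem_top, ?_⟩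
    rw [BS.map_toR_add_nsmul_natZ L (hL1 _ hvQ)]
    ring

/-- For n = 2 and a bounded one-dimensional face Q with lattice points v = (a,b),
v' = (a',b'), a < a', b > b', G_Q generated by v - v': every element of
(M_Q \\ M_Q') ∩ V_Q yields, after shifting by a multiple of v, an element of the
box E_Q = {(i,j) : 1 ≤ i ≤ a', 1 ≤ j ≤ b} giving the same root; consequently
R_Q = ∪ₖ { -L_Q(u) + k : u ∈ E_Q ∩ (M_Q^{(k)} \\ M_Q^{(k+1)}) }. -/
theorem box_EQ_description (a b a' b' : ℕ) (haa' : a < a') (hbb' : b' < b)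
    (Γ : Set (Fin 2 → ℕ)) (hΓ : BS.IsMonIdeal Γ)
    (Q : Set (Fin 2 → ℝ)) (hface : IsExposed ℝ (BS.newton Γ) Q)
    (hbdd : Bornology.IsBounded Q) (hnc : ¬ BS.InCoordHyp Q)
    (hv : (![a, b] : Fin 2 → ℕ) ∈ Γ) (hvQ : BS.natR ![a, b] ∈ Q)
    (hv' : (![a', b'] : Fin 2 → ℕ) ∈ Γ) (hv'Q : BS.natR ![a', b'] ∈ Q)
    (hG : BS.diffGroup Γ Q =
      AddSubgroup.closure {BS.natZ ![a, b] - BS.natZ ![a', b']})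
    (L : (Fin 2 → ℝ) →ₗ[ℝ] ℝ) (hL1 : ∀ q ∈ Q, L q = 1) :
    (∀ u ∈ BS.MQ Γ Q \ BS.MQk Γ Q ![a, b] 1, BS.toR u ∈ BS.VQ Q →
      ∃ u' ∈ {w : Fin 2 → ℤ | 0 < w 0 ∧ w 0 ≤ (a' : ℤ) ∧ 0 < w 1 ∧ w 1 ≤ (b : ℤ)},
        ∃ k : ℕ, u' ∈ BS.MQk Γ Q ![a, b] k \ BS.MQk Γ Q ![a, b] (k+1) ∧
          - L (BS.toR u) = - L (BS.toR u') + (k : ℝ)) ∧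
    BS.RQ Γ Q ![a, b] L =
      {x : ℝ | ∃ k : ℕ,
        ∃ u ∈ {w : Fin 2 → ℤ | 0 < w 0 ∧ w 0 ≤ (a' : ℤ) ∧ 0 < w 1 ∧ w 1 ≤ (b : ℤ)} ∩
          (BS.MQk Γ Q ![a, b] k \ BS.MQk Γ Q ![a, b] (k+1)),
        x = - L (BS.toR u) + (k : ℝ)} :=
  box_EQ_description_general a b a' b' haa' hbb' Γ hΓ Q hv hvQ hv' hv'Q L hL1
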